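/- For n odd, if ω₂ and ω₃ vanish on a real subspace X of a quaternionic vector space with compatible metric g and complex structures I₁, I₂, I₃ satisfying the quaternion relations, then the real part of (ω₃ + i·ω₁)^n restricted to X vanishes, where ω_j(u,v) = g(I_j u, v). -/

import Mathlib

/-!
On `X` the form `ω₃` vanishes, so `ω₃ + i ω₁` agrees there with `i ω₁`. Since `formPow` is
homogeneous of degree `n`, its value is `iⁿ` times `formPow ω₁`, which is real; for odd `n`
the factor `iⁿ = ±i` is purely imaginary, so the real part vanishes.
-/

open scoped BigOperators

/-- The `n`-th "power" of a complex-valued 2-form `ω`, as a `2n`-multilinear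
expression: `(ω^n)(x₁,...,x_{2n}) = ∑_σ sign σ · ∏ᵢ ω(x_{σ(2i)}, x_{σ(2i+1)})`. -/
noncomputable def formPow {V : Type*} (ω : V → V → ℂ) (n : ℕ)
    (x : Fin (2 * n) → V) : ℂ :=
  ∑ σ : Equiv.Perm (Fin (2 * n)),
    ((Equiv.Perm.sign σ : ℤ) : ℂ) *
      ∏ i : Fin n,
        ω (x (σ ⟨2 * i.1, by omega⟩)) (x (σ ⟨2 * i.1 + 1, by omega⟩))

section FormPow

variable {V : Type*} {n : ℕ}

theorem formPow_congr {ω ω' : V → V → ℂ} {x : Fin (2 * n) → V}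
    (h : ∀ i j, ω (x i) (x j) = ω' (x i) (x j)) : formPow ω n x = formPow ω' n x := by
  simp only [formPow, h]

theorem formPow_const_mul (c : ℂ) (ω : V → V → ℂ) (x : Fin (2 * n) → V) :
    formPow (fun u v => c * ω u v) n x = c ^ n * formPow ω n x := by
  simp only [formPow, Finset.prod_mul_distrib, Finset.prod_const, Finset.card_univ,
    Fintype.card_fin, Finset.mul_sum]
  exact Finset.sum_congr rfl fun _ _ => by ring

theorem im_formPow_ofReal (ω : V → V → ℝ) (x : Fin (2 * n) → V) :
    (formPow (fun u v => (ω u v : ℂ)) n x).im = 0 := by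
  simp only [formPow, Complex.im_sum, ← Complex.ofReal_intCast, ← Complex.ofReal_prod,
    ← Complex.ofReal_mul, Complex.ofReal_im, Finset.sum_const_zero]

end FormPow

theorem Complex.re_I_pow_of_odd {n : ℕ} (hn : Odd n) : (Complex.I ^ n).re = 0 := by
  obtain ⟨k, rfl⟩ := hn
  rw [pow_succ, pow_mul, Complex.I_sq, Complex.mul_I_re, ← Complex.ofReal_one,
    ← Complex.ofReal_neg, ← Complex.ofReal_pow, Complex.ofReal_im, neg_zero]

theorem re_formPow_vanishes_general (n : ℕ) (hn : Odd n)
    {V : Type*} [NormedAddCommGroup V] [InnerProductSpace ℝ V]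
    (I₁ I₃ : V →ₗ[ℝ] V)
    (X : Submodule ℝ V)
    (hω₃ : ∀ u ∈ X, ∀ v ∈ X, (inner ℝ (I₃ u) v : ℝ) = 0)
    (x : Fin (2 * n) → V) (hx : ∀ i, x i ∈ X) :
    (formPow (fun u v => ((inner ℝ (I₃ u) v : ℝ) : ℂ) +
        Complex.I * ((inner ℝ (I₁ u) v : ℝ) : ℂ)) n x).re = 0 := by
  have hX : formPow (fun u v => ((inner ℝ (I₃ u) v : ℝ) : ℂ) +
      Complex.I * ((inner ℝ (I₁ u) v : ℝ) : ℂ)) n x =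
      formPow (fun u v => Complex.I * ((inner ℝ (I₁ u) v : ℝ) : ℂ)) n x :=
    formPow_congr fun i j => by rw [hω₃ _ (hx i) _ (hx j), Complex.ofReal_zero, zero_add]
  rw [hX, formPow_const_mul, Complex.mul_re, Complex.re_I_pow_of_odd hn,
    im_formPow_ofReal (fun u v => inner ℝ (I₁ u) v)]
  ring

/-- For `n` odd, if `ω₂` and `ω₃` vanish on a real subspace `X` of a
quaternionic Hermitian vector space, then `Re((ω₃ + i·ω₁)^n)` vanishes on `X`. -/
theorem re_formPow_vanishes (n : ℕ) (hn : Odd n)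
    {V : Type*} [NormedAddCommGroup V] [InnerProductSpace ℝ V]
    (I₁ I₂ I₃ : V →ₗ[ℝ] V)
    (hI₁ : ∀ v, I₁ (I₁ v) = -v) (hI₂ : ∀ v, I₂ (I₂ v) = -v)
    (hI₃ : ∀ v, I₃ (I₃ v) = -v)
    (h12 : ∀ v, I₁ (I₂ v) = I₃ v) (h23 : ∀ v, I₂ (I₃ v) = I₁ v)
    (h31 : ∀ v, I₃ (I₁ v) = I₂ v)
    (hg₁ : ∀ u v, (inner ℝ (I₁ u) (I₁ v) : ℝ) = inner ℝ u v)
    (hg₂ : ∀ u v, (inner ℝ (I₂ u) (I₂ v) : ℝ) = inner ℝ u v)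
    (hg₃ : ∀ u v, (inner ℝ (I₃ u) (I₃ v) : ℝ) = inner ℝ u v)
    (X : Submodule ℝ V)
    (hω₂ : ∀ u ∈ X, ∀ v ∈ X, (inner ℝ (I₂ u) v : ℝ) = 0)
    (hω₃ : ∀ u ∈ X, ∀ v ∈ X, (inner ℝ (I₃ u) v : ℝ) = 0)
    (x : Fin (2 * n) → V) (hx : ∀ i, x i ∈ X) :
    (formPow (fun u v => ((inner ℝ (I₃ u) v : ℝ) : ℂ) +
        Complex.I * ((inner ℝ (I₁ u) v : ℝ) : ℂ)) n x).re = 0 :=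
  re_formPow_vanishes_general n hn I₁ I₃ X hω₃ x hx
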